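/- arXiv:0806.2461 — 7 statements merged into one kernel-verified Lean document; each statement's English description precedes it below -/
import Mathlib

section
/- Let G be a finite group and H, K subgroups of G. The Weyl group W_G K = N_G(K)/K acts freely on (G/K)^H from the right by gK · nK = gnK; consequently |W_G K| divides |(G/K)^H|. -/
/-!
Right multiplication by `N = N_G(K)` is an action of `N.op ≤ Gᵐᵒᵖ` on `G ⧸ K` that commutes with
the left `G`-action, so it preserves `(G ⧸ K)^H`. The stabilizer of every coset is `K`,
hence every orbit in `(G ⧸ K)^H` is in bijection with `N ⧸ K`, and `|N ⧸ K|` divides the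
number of fixed points.
-/

open MulAction

theorem QuotientGroup.mk_mul_eq_mk_iff {G : Type*} [Group G] {K : Subgroup G} {g x : G} :
    ((g * x : G) : G ⧸ K) = g ↔ x ∈ K := by
  rw [QuotientGroup.eq, mul_inv_rev, inv_mul_cancel_right, inv_mem_iff]

theorem Subgroup.relIndex_op {G : Type*} [Group G] (H K : Subgroup G) :
    H.op.relIndex K.op = H.relIndex K := by
  -- `g ↦ op g⁻¹` is an isomorphism `G ≃* Gᵐᵒᵖ` sending each subgroup to its opposite
  have hmap (L : Subgroup G) : L.map (MulEquiv.inv' G).toMonoidHom = L.op := by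
    ext x
    exact ⟨fun ⟨y, hy, e⟩ => e ▸ by simpa [Subgroup.mem_op],
      fun h => ⟨x.unop⁻¹, inv_mem h, by simp⟩⟩
  rw [← hmap, ← hmap, relIndex_map_map_of_injective _ _ (MulEquiv.inv' G).injective]

namespace MulAction

variable {M N α : Type*} [Monoid M] [MulAction M α] [Monoid N] [MulAction N α]
  [SMulCommClass M N α]

theorem smul_mem_fixedPoints_of_smulCommClass (n : N) {a : α} (ha : a ∈ fixedPoints M α) :
    n • a ∈ fixedPoints M α := fun m => by rw [smul_comm, ha m]

variable (M N α) in
def fixedPointsSubMulAction : SubMulAction N α where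
  carrier := fixedPoints M α
  smul_mem' := smul_mem_fixedPoints_of_smulCommClass

instance : MulAction N (fixedPoints M α) :=
  inferInstanceAs <| MulAction N (fixedPointsSubMulAction M N α)

end MulAction

instance MulAction.Quotient.smulCommClass {G X Y : Type*} [Group G] [Monoid X] [Monoid Y]
    [MulAction X G] [MulAction Y G] [SMulCommClass X Y G] (H : Subgroup G)
    [QuotientAction X H] [QuotientAction Y H] : SMulCommClass X Y (G ⧸ H) where
  smul_comm x y q := q.inductionOn' fun g => congrArg QuotientGroup.mk (smul_comm x y g)

theorem MulAction.card_quotient_dvd_card_of_stabilizer_eq {M α : Type*} [Group M] [MulAction M α]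
    {L : Subgroup M} (h : ∀ a : α, stabilizer M a = L) : Nat.card (M ⧸ L) ∣ Nat.card α := by
  have e : α ≃ orbitRel.Quotient M α × (M ⧸ L) :=
    (selfEquivSigmaOrbitsQuotientStabilizer M α).trans <|
      (Equiv.sigmaCongrRight fun ω => Subgroup.quotientEquivOfEq (h _)).trans <|
        Equiv.sigmaEquivProd _ _
  rw [Nat.card_congr e, Nat.card_prod]
  exact dvd_mul_left _ _

theorem QuotientGroup.stabilizer_normalizer_op {G : Type*} [Group G] (K : Subgroup G) (x : G ⧸ K) :
    stabilizer (Subgroup.normalizer (K : Set G)).op x =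
      K.op.subgroupOf (Subgroup.normalizer (K : Set G)).op := by
  ext n
  induction x using QuotientGroup.induction_on with
  | H g => exact QuotientGroup.mk_mul_eq_mk_iff

theorem weyl_acts_freely_on_fixedPoints_general (G : Type) [Group G]
    (H K : Subgroup G) :
    -- the right action `gK · n = (g*n)K` (for `n` in the normalizer) is well defined on `G/K`
    (∀ (n : Subgroup.normalizer (K : Set G)) (g g' : G), (g : G ⧸ K) = (g' : G ⧸ K) →
        ((g * n : G) : G ⧸ K) = ((g' * n : G) : G ⧸ K)) ∧
    -- it preserves the `H`-fixed points
    (∀ (n : Subgroup.normalizer (K : Set G)) (g : G), (g : G ⧸ K) ∈ fixedPoints H (G ⧸ K) →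
        ((g * n : G) : G ⧸ K) ∈ fixedPoints H (G ⧸ K)) ∧
    -- the induced action of `W_G K = N_G(K)/K` is free: only elements of `K` fix a point
    (∀ (n : Subgroup.normalizer (K : Set G)) (g : G), (g : G ⧸ K) ∈ fixedPoints H (G ⧸ K) →
        ((g * n : G) : G ⧸ K) = (g : G ⧸ K) → (n : G) ∈ K) ∧
    -- hence the order of the Weyl group divides the number of `H`-fixed points
    Nat.card (Subgroup.normalizer (K : Set G) ⧸ K.subgroupOf (Subgroup.normalizer (K : Set G))) ∣
      Nat.card (fixedPoints H (G ⧸ K)) := by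
  set N := Subgroup.normalizer (K : Set G)
  let opN (n : N) : N.op := ⟨MulOpposite.op n, n.2⟩
  have : SMulCommClass H N.op (G ⧸ K) := Subgroup.smulCommClass_left H
  refine ⟨fun n g g' h => congrArg (opN n • ·) h,
    fun n g hg => smul_mem_fixedPoints_of_smulCommClass (opN n) hg,
    fun n g _ h => QuotientGroup.mk_mul_eq_mk_iff.mp h, ?_⟩
  change K.relIndex N ∣ _
  rw [← Subgroup.relIndex_op]
  refine card_quotient_dvd_card_of_stabilizer_eq fun x => ?_
  rw [← QuotientGroup.stabilizer_normalizer_op K x]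
  exact SubMulAction.stabilizer_of_subMul (p := fixedPointsSubMulAction H N.op (G ⧸ K)) x

/-- For a finite group `G` and subgroups `H, K ≤ G`, the Weyl group
`W_G K = N_G(K)/K` acts freely on `(G/K)^H` from the right by `gK · nK = gnK`;
consequently `|W_G K|` divides `|(G/K)^H|`.  We state that the formula `gK · nK = gnK`
gives a well-defined action on `(G/K)^H`, that this action is free, and the resulting
divisibility. -/
theorem weyl_acts_freely_on_fixedPoints (G : Type) [Group G] [Finite G]
    (H K : Subgroup G) :
    -- the right action `gK · n = (g*n)K` (for `n` in the normalizer) is well defined on `G/K`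
    (∀ (n : Subgroup.normalizer (K : Set G)) (g g' : G), (g : G ⧸ K) = (g' : G ⧸ K) →
        ((g * n : G) : G ⧸ K) = ((g' * n : G) : G ⧸ K)) ∧
    -- it preserves the `H`-fixed points
    (∀ (n : Subgroup.normalizer (K : Set G)) (g : G), (g : G ⧸ K) ∈ fixedPoints H (G ⧸ K) →
        ((g * n : G) : G ⧸ K) ∈ fixedPoints H (G ⧸ K)) ∧
    -- the induced action of `W_G K = N_G(K)/K` is free: only elements of `K` fix a point
    (∀ (n : Subgroup.normalizer (K : Set G)) (g : G), (g : G ⧸ K) ∈ fixedPoints H (G ⧸ K) →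
        ((g * n : G) : G ⧸ K) = (g : G ⧸ K) → (n : G) ∈ K) ∧
    -- hence the order of the Weyl group divides the number of `H`-fixed points
    Nat.card (Subgroup.normalizer (K : Set G) ⧸ K.subgroupOf (Subgroup.normalizer (K : Set G))) ∣
      Nat.card (fixedPoints H (G ⧸ K)) :=
  weyl_acts_freely_on_fixedPoints_general G H K
end

section
/- For a finite group G, the mark homomorphism φ : A(G) → ∏_{(H)} ℤ is injective. -/
/-!
Choose `H` maximal among the subgroups with `X^H ≠ ∅`. Equal marks give `Y^H ≠ ∅` as well, and by
maximality every point of `X^H` or of `Y^H` has stabilizer exactly `H`, so `X` and `Y` both contain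
an orbit isomorphic to `G ⧸ H`. Marks are additive over disjoint unions, so the complements of
these two orbits again have equal marks, and induction on `|X|` applies to them.
-/

open MulAction

def EquivariantlyEquiv (G X Y : Type*) [SMul G X] [SMul G Y] : Prop :=
  ∃ e : X ≃ Y, ∀ (g : G) (x : X), e (g • x) = g • e x

namespace EquivariantlyEquiv

variable {G X Y Z W : Type*}

section SMul

variable [SMul G X] [SMul G Y] [SMul G Z] [SMul G W]

theorem symm : EquivariantlyEquiv G X Y → EquivariantlyEquiv G Y X := by
  rintro ⟨e, he⟩
  refine ⟨e.symm, fun g y => e.injective ?_⟩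
  rw [he, e.apply_symm_apply, e.apply_symm_apply]

theorem trans : EquivariantlyEquiv G X Y → EquivariantlyEquiv G Y Z →
    EquivariantlyEquiv G X Z := by
  rintro ⟨e, he⟩ ⟨f, hf⟩
  exact ⟨e.trans f, fun g x => by simp [he, hf]⟩

theorem sum : EquivariantlyEquiv G X Y → EquivariantlyEquiv G Z W →
    EquivariantlyEquiv G (X ⊕ Z) (Y ⊕ W) := by
  rintro ⟨e, he⟩ ⟨f, hf⟩
  refine ⟨e.sumCongr f, ?_⟩
  rintro g (x | z)
  · simp [Sum.smul_inl, he]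
  · simp [Sum.smul_inr, hf]

end SMul

theorem card_fixedPoints_eq [Group G] [MulAction G X] [MulAction G Y]
    (hXY : EquivariantlyEquiv G X Y) (H : Subgroup G) :
    Nat.card (fixedPoints H X) = Nat.card (fixedPoints H Y) := by
  obtain ⟨e, he⟩ := hXY
  refine Nat.card_congr (e.subtypeEquiv fun x => ?_)
  simp only [mem_fixedPoints, Subgroup.smul_def, Subtype.forall]
  refine forall₂_congr fun g _ => ?_
  rw [← he, e.apply_eq_iff_eq]

end EquivariantlyEquiv

section Monoid

variable {M A B : Type*} [Monoid M] [MulAction M A] [MulAction M B]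

def fixedPointsSumEquiv : fixedPoints M (A ⊕ B) ≃ fixedPoints M A ⊕ fixedPoints M B :=
  Equiv.subtypeSum.trans <| Equiv.sumCongr
    (Equiv.subtypeEquivRight fun a => by simp [mem_fixedPoints, Sum.smul_inl])
    (Equiv.subtypeEquivRight fun b => by simp [mem_fixedPoints, Sum.smul_inr])

theorem card_fixedPoints_sum [Finite A] [Finite B] :
    Nat.card (fixedPoints M (A ⊕ B)) =
      Nat.card (fixedPoints M A) + Nat.card (fixedPoints M B) := by
  rw [Nat.card_congr fixedPointsSumEquiv, Nat.card_sum]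

end Monoid

def SubMulAction.orbit (G : Type*) {X : Type*} [Group G] [MulAction G X] (x : X) :
    SubMulAction G X where
  carrier := MulAction.orbit G x
  smul_mem' g _ := mem_orbit_of_mem_orbit g

section Group

variable {G X Y : Type*} [Group G] [MulAction G X] [MulAction G Y]

theorem equivariantlyEquiv_quotient_orbit {H : Subgroup G} {x : X} (hx : stabilizer G x = H) :
    EquivariantlyEquiv G (G ⧸ H) (SubMulAction.orbit G x) := by
  subst hx
  refine ⟨Equiv.ofBijective (fun q => ⟨ofQuotientStabilizer G x q, ?_⟩) ⟨?_, ?_⟩, ?_⟩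
  · induction q using QuotientGroup.induction_on with
    | H g => exact mem_orbit x g
  · exact fun q q' h => injective_ofQuotientStabilizer G x (congrArg Subtype.val h)
  · rintro ⟨_, g, rfl⟩
    exact ⟨g, rfl⟩
  · exact fun g q => Subtype.ext (ofQuotientStabilizer_smul G x g q)

theorem equivariantlyEquiv_orbit_of_stabilizer_eq {x : X} {y : Y}
    (hxy : stabilizer G x = stabilizer G y) :
    EquivariantlyEquiv G (SubMulAction.orbit G x) (SubMulAction.orbit G y) :=
  (equivariantlyEquiv_quotient_orbit hxy).symm.trans (equivariantlyEquiv_quotient_orbit rfl)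

theorem equivariantlyEquiv_sum_compl (p : SubMulAction G X) :
    EquivariantlyEquiv G (p ⊕ ↥pᶜ) X := by
  classical
  exact ⟨Equiv.Set.sumCompl (p : Set X), by rintro g (x | x) <;> rfl⟩

theorem fixedPoints_bot_eq_univ : fixedPoints (⊥ : Subgroup G) X = Set.univ :=
  Set.eq_univ_of_forall fun x g => by rw [Subgroup.smul_def, Subgroup.mem_bot.mp g.2, one_smul]

theorem stabilizer_eq_of_maximal {H : Subgroup G}
    (hH : Maximal (fun K : Subgroup G => (fixedPoints K X).Nonempty) H) {x : X}
    (hx : x ∈ fixedPoints H X) : stabilizer G x = H :=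
  hH.eq_of_ge ⟨x, fun g => g.2⟩ fun g hg => hx ⟨g, hg⟩

theorem exists_stabilizer_eq_of_card_fixedPoints_eq [Finite G] [Finite X] [Finite Y] [Nonempty X]
    (h : ∀ H : Subgroup G, Nat.card (fixedPoints H X) = Nat.card (fixedPoints H Y)) :
    ∃ x : X, ∃ y : Y, stabilizer G x = stabilizer G y := by
  have hne : ∀ H : Subgroup G, (fixedPoints H X).Nonempty ↔ (fixedPoints H Y).Nonempty := by
    intro H
    rw [← Set.nonempty_coe_sort, ← Set.nonempty_coe_sort, ← Finite.card_pos_iff,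
      ← Finite.card_pos_iff, h]
  obtain ⟨H, hH⟩ := exists_maximal_of_wellFoundedGT
    (fun K : Subgroup G => (fixedPoints K X).Nonempty) ⟨⊥, by simp [fixedPoints_bot_eq_univ]⟩
  obtain ⟨x, hx⟩ := hH.prop
  obtain ⟨y, hy⟩ := (hne H).mp hH.prop
  refine ⟨x, y, (stabilizer_eq_of_maximal hH hx).trans (stabilizer_eq_of_maximal ?_ hy).symm⟩
  simpa only [hne] using hH

theorem equivariantlyEquiv_of_card_fixedPoints_eq [Finite G] [Finite X] [Finite Y]
    (h : ∀ H : Subgroup G, Nat.card (fixedPoints H X) = Nat.card (fixedPoints H Y)) :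
    EquivariantlyEquiv G X Y := by
  induction hn : Nat.card X using Nat.strong_induction_on generalizing X Y with
  | _ n ih =>
  rcases isEmpty_or_nonempty X with hX | hX
  · have hcard : Nat.card Y = Nat.card X := by
      simpa [fixedPoints_bot_eq_univ] using (h ⊥).symm
    have : IsEmpty Y := Finite.card_eq_zero_iff.mp (hcard.trans (Finite.card_eq_zero_iff.mpr hX))
    exact ⟨Equiv.equivOfIsEmpty X Y, fun _ x => isEmptyElim x⟩
  obtain ⟨x, y, hxy⟩ := exists_stabilizer_eq_of_card_fixedPoints_eq h
  set Ox := SubMulAction.orbit G x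
  set Oy := SubMulAction.orbit G y
  have hOrbit : EquivariantlyEquiv G Ox Oy := equivariantlyEquiv_orbit_of_stabilizer_eq hxy
  have hCompl : EquivariantlyEquiv G ↥Oxᶜ ↥Oyᶜ := by
    refine ih _ ?_ (fun K => ?_) rfl
    · rw [← hn]
      exact Finite.card_subtype_lt (x := x) fun hx => hx (mem_orbit_self x)
    · have hXK := (equivariantlyEquiv_sum_compl Ox).card_fixedPoints_eq K
      have hYK := (equivariantlyEquiv_sum_compl Oy).card_fixedPoints_eq K
      rw [card_fixedPoints_sum] at hXK hYK
      have := hOrbit.card_fixedPoints_eq K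
      have := h K
      omega
  exact (equivariantlyEquiv_sum_compl Ox).symm.trans
    ((hOrbit.sum hCompl).trans (equivariantlyEquiv_sum_compl Oy))

end Group

/-- For a finite group `G`, the mark homomorphism of the Burnside ring is
injective.  Equivalently (as stated here): if two finite `G`-sets `X, Y` satisfy
`|X^H| = |Y^H|` for all subgroups `H ≤ G`, then `X` and `Y` are `G`-isomorphic. -/
theorem gset_iso_of_card_fixedPoints_eq (G : Type) [Group G] [Finite G]
    (X Y : Type) [Finite X] [Finite Y] [MulAction G X] [MulAction G Y]
    (h : ∀ H : Subgroup G, Nat.card (fixedPoints H X) = Nat.card (fixedPoints H Y)) :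
    ∃ e : X ≃ Y, ∀ (g : G) (x : X), e (g • x) = g • e x :=
  equivariantlyEquiv_of_card_fixedPoints_eq h
end

section
/- For a finite group G, every prime ideal of the Burnside ring A(G) is of the form q(H,0) = {x ∈ A(G) | φ_H(x) = 0} or q(H,p) = {x ∈ A(G) | p divides φ_H(x)} for some subgroup H ≤ G and prime p. -/
open MulAction

/-- The vector of marks of a `G`-set `X`: its `H`-component is the number of `H`-fixed
points `|X^H|`. -/
noncomputable def markVector (G : Type) [Group G] (X : Type) [MulAction G X] :
    Subgroup G → ℤ :=
  fun H => Nat.card (fixedPoints H X)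

/-- The set of mark vectors of finite `G`-sets. -/
def GSetMarks (G : Type) [Group G] : Set (Subgroup G → ℤ) :=
  {f | ∃ (X : Type) (_ : Finite X) (_ : MulAction G X), f = markVector G X}

/-- The Burnside ring `A(G)`, realized (via the injective mark homomorphism) as the
subring of `∏_{H ≤ G} ℤ` generated by the mark vectors of finite `G`-sets. -/
def BurnsideRing (G : Type) [Group G] : Subring (Subgroup G → ℤ) :=
  Subring.closure (GSetMarks G)

theorem mem_gsetMarks (G : Type) [Group G] (X : Type) [hF : Finite X] [hM : MulAction G X] :
    markVector G X ∈ GSetMarks G := ⟨X, hF, hM, rfl⟩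

/-- The class `[X] ∈ A(G)` of a finite `G`-set `X`. -/
noncomputable def burnsideMk (G : Type) [Group G] (X : Type) [Finite X] [MulAction G X] :
    BurnsideRing G :=
  ⟨markVector G X, Subring.subset_closure (mem_gsetMarks G X)⟩

/-- The mark (fixed-point) ring homomorphism `φ_H : A(G) → ℤ`. -/
noncomputable def mark (G : Type) [Group G] (H : Subgroup G) : BurnsideRing G →+* ℤ :=
  (Pi.evalRingHom (fun _ => ℤ) H).comp (BurnsideRing G).subtype

section aux

variable {ι : Type} [Finite ι]

/-- Every element of a finite product of `ℤ`'s is integral over any subring: it takes only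
finitely many values `c`, and the product of the monic linear polynomials `X - c` kills it. -/
theorem pi_int_isIntegral (R : Subring (ι → ℤ)) : Algebra.IsIntegral R (ι → ℤ) := by
  constructor
  intro x
  have : Fintype ι := Fintype.ofFinite ι
  classical
  refine ⟨∏ c ∈ Finset.univ.image x, (Polynomial.X - Polynomial.C ((c : ℤ) : R)), ?_, ?_⟩
  · exact Polynomial.monic_prod_of_monic _ _ fun c _ => Polynomial.monic_X_sub_C _
  · rw [Polynomial.eval₂_finset_prod]
    funext i
    rw [Finset.prod_apply]
    refine Finset.prod_eq_zero (Finset.mem_image_of_mem x (Finset.mem_univ i)) ?_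
    rw [Polynomial.eval₂_sub, Polynomial.eval₂_X, Polynomial.eval₂_C]
    show x i - ((((x i : ℤ) : R) : ι → ℤ)) i = 0
    rw [show (((x i : ℤ) : R) : ι → ℤ) = ((x i : ℤ) : ι → ℤ) from map_intCast R.subtype _]
    simp

/-- Every prime ideal of a finite product of `ℤ`'s is the pullback of a prime ideal of `ℤ`
along some evaluation map. -/
theorem pi_int_prime (Q : Ideal (ι → ℤ)) (hQ : Q.IsPrime) :
    ∃ (i : ι) (J : Ideal ℤ), J.IsPrime ∧ Q = Ideal.comap (Pi.evalRingHom (fun _ => ℤ) i) J := by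
  have : Fintype ι := Fintype.ofFinite ι
  classical
  have h1 : (1 : ι → ℤ) ∉ Q := by simpa using hQ.ne_top ∘ (Ideal.eq_top_iff_one Q).2
  have hsum : ∑ i : ι, (Pi.single i 1 : ι → ℤ) = 1 := by
    funext j; simp [Finset.sum_apply, Pi.single_apply]
  obtain ⟨i, -, hi⟩ : ∃ i ∈ Finset.univ, (Pi.single i 1 : ι → ℤ) ∉ Q := by
    by_contra h
    push_neg at h
    exact h1 (hsum ▸ Ideal.sum_mem Q fun j _ => h j (Finset.mem_univ j))
  have hker : ∀ y : ι → ℤ, y i = 0 → y ∈ Q := by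
    intro y hy
    have : y = ∑ j ∈ Finset.univ.erase i, y * Pi.single j 1 := by
      funext k
      rw [Finset.sum_apply]
      by_cases hk : k = i
      · subst hk; simp [Pi.single_apply, hy, Finset.sum_ite_eq']
      · simp [Pi.single_apply, Finset.sum_ite_eq', hk]
    rw [this]
    refine Ideal.sum_mem Q fun j hj => ?_
    have hji : j ≠ i := (Finset.mem_erase.1 hj).1
    have h00 : (Pi.single i 1 : ι → ℤ) * Pi.single j 1 = 0 := by
      funext k; by_cases hk : k = i <;> simp [Pi.single_apply, hk, hji.symm]
    have h0 : (Pi.single i 1 : ι → ℤ) * Pi.single j 1 ∈ Q := by rw [h00]; exact Q.zero_mem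
    rcases hQ.mem_or_mem h0 with h | h
    · exact absurd h hi
    · exact Q.mul_mem_left y h
  have hsurj : Function.Surjective (Pi.evalRingHom (fun _ : ι => ℤ) i) := fun n =>
    ⟨Pi.single i n, by simp⟩
  have hkerle : RingHom.ker (Pi.evalRingHom (fun _ : ι => ℤ) i) ≤ Q := fun y hy =>
    hker y hy
  refine ⟨i, Ideal.map (Pi.evalRingHom (fun _ => ℤ) i) Q,
    Ideal.map_isPrime_of_surjective hsurj hkerle, le_antisymm (Ideal.le_comap_map) ?_⟩
  intro x hx
  obtain ⟨y, hy, hxy⟩ := (Ideal.mem_map_iff_of_surjective _ hsurj).1 hx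
  have : x - y ∈ Q := hker _ (by simpa [sub_eq_zero] using hxy.symm)
  simpa using Q.add_mem this hy

end aux

/-- For a finite group `G`, every prime ideal of the Burnside ring `A(G)` is
of the form `q(H,0) = ker φ_H` or `q(H,p) = φ_H⁻¹(pℤ)` for some subgroup `H ≤ G` and some
prime `p`. -/
theorem burnside_prime_ideals (G : Type) [Group G] [Finite G]
    (P : Ideal (BurnsideRing G)) (hP : P.IsPrime) :
    (∃ H : Subgroup G, P = RingHom.ker (mark G H)) ∨
      ∃ (H : Subgroup G) (p : ℕ), p.Prime ∧
        P = Ideal.comap (mark G H) (Ideal.span {(p : ℤ)}) := by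
  have hint : Algebra.IsIntegral (BurnsideRing G) (Subgroup G → ℤ) :=
    pi_int_isIntegral _
  have hbot : Ideal.comap (algebraMap (BurnsideRing G) (Subgroup G → ℤ)) (⊥ : Ideal _) ≤ P := by
    have : RingHom.ker (algebraMap (BurnsideRing G) (Subgroup G → ℤ)) = ⊥ :=
      (RingHom.injective_iff_ker_eq_bot _).mp (BurnsideRing G).subtype_injective
    rw [← RingHom.ker_eq_comap_bot, this]
    exact bot_le
  obtain ⟨Q, -, hQp, hQ⟩ := Ideal.exists_ideal_over_prime_of_isIntegral P ⊥ hbot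
  obtain ⟨H, J, hJp, rfl⟩ := pi_int_prime Q hQp
  rw [Ideal.comap_comap] at hQ
  have hmark : (Pi.evalRingHom (fun _ => ℤ) H).comp
      (algebraMap (BurnsideRing G) (Subgroup G → ℤ)) = mark G H := rfl
  rw [hmark] at hQ
  obtain ⟨g, rfl⟩ : ∃ g : ℤ, J = Ideal.span {g} :=
    ⟨Submodule.IsPrincipal.generator J, (Ideal.span_singleton_generator J).symm⟩
  by_cases hg : g = 0
  · left
    exact ⟨H, by rw [← hQ, hg, RingHom.ker_eq_comap_bot, Ideal.span_singleton_eq_bot.mpr rfl]⟩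
  · right
    have hprime : Prime g := (Ideal.span_singleton_prime hg).1 hJp
    refine ⟨H, g.natAbs, Int.prime_iff_natAbs_prime.1 hprime, ?_⟩
    rw [← hQ, Int.span_natAbs]
end

section
/- For a finite group G, the Burnside ring A(G) has Krull dimension 1: the ideals q(H,p) (p prime) are maximal with residue field ℤ/p, and the ideals q(H,0) are minimal primes with quotient ring ℤ. -/
/-! The mark homomorphisms embed `A(G)` in `ℤ ^ Sub(G)`, which is finite over `ℤ` and hence
integral over `A(G)`. By lying over, every prime of `A(G)` is `φ_H⁻¹(q)` for a prime `q` of `ℤ`.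
Such a prime is maximal when `q ≠ 0`, and minimal when `q = 0`: a prime inside `ker φ_K` meets `ℤ`
in `0`, so it is some `ker φ_H ≤ ker φ_K`, and a ring map to `ℤ` is determined by its kernel.
Hence chains of primes have length at most `1`, and the surjection `φ_H : A(G) → ℤ` pulls back one
of length `1` from `ℤ`. -/

open MulAction

namespace RingHom

variable {R : Type*} [CommRing R]

theorem surjective_of_codomain_int (φ : R →+* ℤ) : Function.Surjective φ :=
  fun n => ⟨n, map_intCast φ n⟩

theorem eq_of_ker_le_of_codomain_int {φ ψ : R →+* ℤ} (h : ker φ ≤ ker ψ) : φ = ψ := by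
  ext a
  have hmem : a - (φ a : R) ∈ ker ψ := h (by simp [mem_ker])
  rw [mem_ker, map_sub, map_intCast, sub_eq_zero] at hmem
  exact hmem.symm

theorem comap_span_prime_isMaximal (φ : R →+* ℤ) {p : ℕ} (hp : p.Prime) :
    ((Ideal.span {(p : ℤ)}).comap φ).IsMaximal :=
  have : Fact p.Prime := ⟨hp⟩
  Ideal.comap_isMaximal_of_surjective φ φ.surjective_of_codomain_int

noncomputable def quotientComapSpanEquivZMod (φ : R →+* ℤ) (p : ℕ) :
    R ⧸ (Ideal.span {(p : ℤ)}).comap φ ≃+* ZMod p :=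
  (Ideal.quotEquivOfEq (by rw [← ZMod.ker_intCastRingHom, comap_ker])).trans
    (quotientKerEquivOfSurjective
      (ZMod.intCast_surjective.comp φ.surjective_of_codomain_int))

theorem one_le_ringKrullDim (φ : R →+* ℤ) : 1 ≤ ringKrullDim R :=
  calc (1 : WithBot ℕ∞) = ringKrullDim ℤ :=
        (IsPrincipalIdealRing.ringKrullDim_eq_one ℤ Int.not_isField).symm
    _ ≤ ringKrullDim R := ringKrullDim_le_of_surjective φ φ.surjective_of_codomain_int

end RingHom

namespace Subring

variable {ι : Type*} [Finite ι] (A : Subring (ι → ℤ))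

instance : Algebra.IsIntegral A (ι → ℤ) := .tower_top ℤ

theorem exists_eq_comap_eval_of_isPrime (P : Ideal A) [P.IsPrime] :
    ∃ (i : ι) (q : Ideal ℤ), q.IsPrime ∧
      P = q.comap ((Pi.evalRingHom (fun _ => ℤ) i).comp A.subtype) := by
  have hker : RingHom.ker (algebraMap A (ι → ℤ)) = ⊥ :=
    (RingHom.injective_iff_ker_eq_bot _).1 A.subtype_injective
  obtain ⟨Q, -, hQ, rfl⟩ := Ideal.exists_ideal_over_prime_of_isIntegral (S := ι → ℤ) P ⊥
    (by rw [← RingHom.ker_eq_comap_bot, hker]; exact bot_le)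
  obtain ⟨i, q, hq⟩ := PrimeSpectrum.exists_comap_evalRingHom_eq ⟨Q, hQ⟩
  refine ⟨i, q.asIdeal, q.isPrime, ?_⟩
  rw [← Ideal.comap_comap, ← q.comap_asIdeal, hq]
  rfl

theorem ker_mem_minimalPrimes (φ : A →+* ℤ) : RingHom.ker φ ∈ minimalPrimes A := by
  refine ⟨⟨RingHom.ker_isPrime φ, bot_le⟩, fun P ⟨hP, _⟩ hle => ?_⟩
  obtain ⟨i, q, -, rfl⟩ := A.exists_eq_comap_eval_of_isPrime P
  have hq : q = ⊥ := eq_bot_iff.2 fun n hn => by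
    have : (n : A) ∈ RingHom.ker φ := hle (by simpa [Ideal.mem_comap] using hn)
    simpa using this
  subst hq
  rw [← RingHom.ker_eq_comap_bot] at hle ⊢
  rw [RingHom.eq_of_ker_le_of_codomain_int hle]

instance : Ring.KrullDimLE 1 A := .mk₁ fun P _ => by
  obtain ⟨i, q, hq, rfl⟩ := A.exists_eq_comap_eval_of_isPrime P
  rcases eq_or_ne q ⊥ with rfl | hq_ne_bot
  · left
    rw [← RingHom.ker_eq_comap_bot]
    exact A.ker_mem_minimalPrimes _
  · right
    have := hq.isMaximal hq_ne_bot
    exact Ideal.comap_isMaximal_of_surjective _ (RingHom.surjective_of_codomain_int _)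

theorem ringKrullDim_eq_one [Nonempty ι] : ringKrullDim A = 1 :=
  le_antisymm (Ring.krullDimLE_iff.1 inferInstance)
    ((Pi.evalRingHom (fun _ => ℤ) (Classical.arbitrary ι)).comp A.subtype).one_le_ringKrullDim

end Subring

/-- For a finite group `G`, the Burnside ring `A(G)` has Krull dimension 1:
the ideals `q(H,p) = φ_H⁻¹(pℤ)` (`p` prime) are maximal with residue field `ℤ/p`, and the
ideals `q(H,0) = ker φ_H` are minimal primes with quotient ring `ℤ`. -/
theorem burnside_krullDim_one (G : Type) [Group G] [Finite G] :
    ringKrullDim (BurnsideRing G) = 1 ∧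
      (∀ (H : Subgroup G) (p : ℕ), p.Prime →
        (Ideal.comap (mark G H) (Ideal.span {(p : ℤ)})).IsMaximal ∧
          Nonempty
            ((BurnsideRing G ⧸ Ideal.comap (mark G H) (Ideal.span {(p : ℤ)})) ≃+*
              ZMod p)) ∧
      (∀ H : Subgroup G,
        RingHom.ker (mark G H) ∈ minimalPrimes (BurnsideRing G) ∧
          Nonempty ((BurnsideRing G ⧸ RingHom.ker (mark G H)) ≃+* ℤ)) :=
  ⟨(BurnsideRing G).ringKrullDim_eq_one,
    fun H _ hp => ⟨(mark G H).comap_span_prime_isMaximal hp,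
      ⟨(mark G H).quotientComapSpanEquivZMod _⟩⟩,
    fun H => ⟨(BurnsideRing G).ker_mem_minimalPrimes (mark G H),
      ⟨RingHom.quotientKerEquivOfSurjective (mark G H).surjective_of_codomain_int⟩⟩⟩
end

section
/- Let G be a finite group and H, K subgroups. Then q(H,0) = q(K,0) if and only if H and K are conjugate in G; equivalently, ker φ_H = ker φ_K implies (H) = (K). -/
open MulAction

open MulAction in
/-- Conjugation gives a bijection between fixed point sets. -/
noncomputable def fixedPointsConjEquiv (G : Type) [Group G] (X : Type) [MulAction G X]
    (H : Subgroup G) (g : G) :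
    fixedPoints H X ≃ fixedPoints (Subgroup.map (MulAut.conj g).toMonoidHom H) X where
  toFun x := ⟨g • (x : X), by
    rintro ⟨k, hk⟩
    obtain ⟨h, hh, rfl⟩ := hk
    show (MulAut.conj g h) • (g • (x : X)) = g • (x : X)
    have hx := x.2 ⟨h, hh⟩
    simp only [MulAut.conj_apply]
    rw [mul_smul, mul_smul, inv_smul_smul]
    exact congrArg (g • ·) hx⟩
  invFun y := ⟨g⁻¹ • (y : X), by
    rintro ⟨h, hh⟩
    show h • (g⁻¹ • (y : X)) = g⁻¹ • (y : X)
    have hy := y.2 ⟨MulAut.conj g h, ⟨h, hh, rfl⟩⟩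
    have hy' : (g * h * g⁻¹) • (y : X) = (y : X) := hy
    have : h • g⁻¹ • (y : X) = g⁻¹ • (g * h * g⁻¹) • (y : X) := by
      simp [mul_smul]
    rw [this, hy']⟩
  left_inv x := by ext; simp
  right_inv y := by ext; simp

open MulAction in
theorem markVector_conj (G : Type) [Group G] (X : Type) [MulAction G X]
    (H : Subgroup G) (g : G) :
    markVector G X (Subgroup.map (MulAut.conj g).toMonoidHom H) = markVector G X H := by
  unfold markVector
  exact congrArg _ (Nat.card_congr (fixedPointsConjEquiv G X H g).symm)

open MulAction in
theorem mark_apply_mk (G : Type) [Group G] (X : Type) [Finite X] [MulAction G X]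
    (H : Subgroup G) :
    mark G H (burnsideMk G X) = Nat.card (fixedPoints H X) := rfl

open MulAction in
/-- If the mark of `K` on `G ⧸ H` is nonzero, some conjugate of `K` lies in `H`. -/
theorem exists_conj_le_of_mark_ne_zero (G : Type) [Group G] [Finite G]
    (H K : Subgroup G) (h : mark G K (burnsideMk G (G ⧸ H)) ≠ 0) :
    ∃ g : G, Subgroup.map (MulAut.conj g).toMonoidHom K ≤ H := by
  rw [mark_apply_mk] at h
  have h' : Nat.card (fixedPoints K (G ⧸ H)) ≠ 0 := by exact_mod_cast h
  have hne : Nonempty (fixedPoints K (G ⧸ H)) := (Nat.card_ne_zero.mp h').1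
  obtain ⟨⟨x, hx⟩⟩ := hne
  obtain ⟨g, rfl⟩ := QuotientGroup.mk_surjective x
  refine ⟨g⁻¹, ?_⟩
  rintro - ⟨k, hk, rfl⟩
  have hfix : (k : G) • (QuotientGroup.mk g : G ⧸ H) = QuotientGroup.mk g := hx ⟨k, hk⟩
  rw [MulAction.Quotient.smul_mk] at hfix
  have h1 := QuotientGroup.eq.mp hfix
  have h2 := H.inv_mem h1
  show (MulAut.conj g⁻¹) k ∈ H
  simpa [MulAut.conj_apply, mul_assoc, smul_eq_mul, mul_inv_rev] using h2

/-- For subgroups `H, K` of a finite group `G`, `q(H,0) = q(K,0)` (i.e.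
`ker φ_H = ker φ_K`) if and only if `H` and `K` are conjugate in `G`. -/
theorem burnside_ker_mark_eq_iff_conj (G : Type) [Group G] [Finite G]
    (H K : Subgroup G) :
    RingHom.ker (mark G H) = RingHom.ker (mark G K) ↔
      ∃ g : G, Subgroup.map (MulAut.conj g).toMonoidHom H = K := by
  constructor
  · intro hker
    have key : ∀ (L M : Subgroup G), RingHom.ker (mark G L) = RingHom.ker (mark G M) →
        ∃ g : G, Subgroup.map (MulAut.conj g).toMonoidHom M ≤ L := by
      intro L M hLM
      apply exists_conj_le_of_mark_ne_zero
      have hL : mark G L (burnsideMk G (G ⧸ L)) ≠ 0 := by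
        rw [mark_apply_mk]
        have : Nonempty (MulAction.fixedPoints L (G ⧸ L)) := by
          refine ⟨⟨((1 : G) : G ⧸ L), ?_⟩⟩
          rintro ⟨l, hl⟩
          show (l : G) • ((1 : G) : G ⧸ L) = ((1 : G) : G ⧸ L)
          rw [MulAction.Quotient.smul_mk]
          exact QuotientGroup.eq.mpr (by simpa using L.inv_mem hl)
        have : Nat.card (MulAction.fixedPoints L (G ⧸ L)) ≠ 0 :=
          Nat.card_ne_zero.mpr ⟨this, Set.toFinite _⟩
        exact_mod_cast this
      intro h0
      exact hL (by
        have : burnsideMk G (G ⧸ L) ∈ RingHom.ker (mark G M) := h0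
        rw [← hLM] at this
        exact this)
    obtain ⟨a, ha⟩ := key H K hker
    obtain ⟨b, hb⟩ := key K H hker.symm
    -- cardinalities
    have cardmap : ∀ (g : G) (L : Subgroup G),
        Nat.card (Subgroup.map (MulAut.conj g).toMonoidHom L) = Nat.card L := by
      intro g L
      exact Nat.card_congr
        (L.equivMapOfInjective _ (MulAut.conj g).injective).symm.toEquiv
    have hKH : Nat.card K ≤ Nat.card H := by
      rw [← cardmap a K]; exact Subgroup.card_le_of_le ha
    have hHK : Nat.card H ≤ Nat.card K := by
      rw [← cardmap b H]; exact Subgroup.card_le_of_le hb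
    refine ⟨b, Subgroup.eq_of_le_of_card_ge hb ?_⟩
    rw [cardmap b H]; exact hKH
  · rintro ⟨g, rfl⟩
    have hmark : mark G (Subgroup.map (MulAut.conj g).toMonoidHom H) = mark G H := by
      ext a
      have hmem : (a : Subgroup G → ℤ) ∈
          RingHom.eqLocus (Pi.evalRingHom (fun _ => ℤ) (Subgroup.map (MulAut.conj g).toMonoidHom H))
            (Pi.evalRingHom (fun _ => ℤ) H) := by
        have hsub : BurnsideRing G ≤ RingHom.eqLocus
            (Pi.evalRingHom (fun _ => ℤ) (Subgroup.map (MulAut.conj g).toMonoidHom H))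
            (Pi.evalRingHom (fun _ => ℤ) H) := by
          apply Subring.closure_le.mpr
          rintro f ⟨X, hF, hM, rfl⟩
          exact markVector_conj G X H g
        exact hsub a.2
      exact hmem
    rw [hmark]
end

section
/- Let G be a finite group and u a unit of the Burnside ring A(G). If |G| is odd, then (u + 1)/2 is an element of A(G) (i.e., u + 1 is divisible by 2 in A(G)), and it is an idempotent; this gives a bijection between unit elements and idempotent elements of A(G) via e ↦ 2e − 1. -/
/-!
For `|G|` odd, the symmetric square `Sym2 X` of a finite `G`-set has `|X^H| (|X^H| + 1) / 2`
fixed points under every subgroup `H`: an element of odd order cannot swap two points. Hence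
`[X]² - [X] = 2 ([Sym2 X] - [X])`, and since the elements `x` with `2 ∣ x² - x` form a subring,
`2 ∣ x² - x` for every `x ∈ A(G)`. A unit `u` has marks `±1`, so `u² = 1` and `2 ∣ 1 - u`,
i.e. `u + 1 = 2e`; then `4 (e² - e) = u² - 1 = 0`, and `A(G) ⊆ ℤ^{subgroups}` has no torsion.
-/

open MulAction

section TorsionFreeRing

variable {R : Type*} [CommRing R] [IsAddTorsionFree R]

theorem two_mul_sub_one_injective : Function.Injective fun e : R => 2 * e - 1 :=
  fun _ _ h => by grind

theorem exists_add_one_eq_two_mul_isIdempotentElem {u : R} (hu : u * u = 1)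
    (h2 : 2 ∣ u * u - u) : ∃ e : R, u + 1 = 2 * e ∧ IsIdempotentElem e := by
  obtain ⟨a, ha⟩ := h2
  have hsum : u + 1 = 2 * (1 - a) := by linear_combination hu - ha
  refine ⟨1 - a, hsum, ?_⟩
  have : 4 * ((1 - a) * (1 - a) - (1 - a)) = 0 := by
    linear_combination hu - (u + 1 - 2 * a) * hsum
  unfold IsIdempotentElem
  grind

end TorsionFreeRing

theorem IsIdempotentElem.isUnit_two_mul_sub_one {R : Type*} [Ring R] {e : R}
    (he : IsIdempotentElem e) : IsUnit (2 * e - 1) :=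
  have h : (2 * e - 1) * (2 * e - 1) = 1 := by
    have h2 : (2 * e - 1) * (2 * e - 1) = 4 * (e * e) - 4 * e + 1 := by noncomm_ring
    rw [h2, he.eq]
    abel
  ⟨⟨_, _, h, h⟩, rfl⟩

def idempotentModTwoSubring (R : Type*) [CommRing R] : Subring R where
  carrier := {x | 2 ∣ x * x - x}
  zero_mem' := by simp
  one_mem' := by simp
  add_mem' {x y} hx hy := by
    change 2 ∣ (x + y) * (x + y) - (x + y)
    convert dvd_add (dvd_add hx hy) (dvd_mul_right 2 (x * y)) using 1
    ring
  neg_mem' {x} hx := by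
    change 2 ∣ -x * -x - -x
    convert dvd_add hx (dvd_mul_right 2 x) using 1
    ring
  mul_mem' {x y} hx hy := by
    change 2 ∣ x * y * (x * y) - x * y
    convert dvd_add (dvd_mul_of_dvd_right hy (x * x)) (dvd_mul_of_dvd_right hx y) using 1
    ring

instance Subring.isAddTorsionFree {R : Type*} [Ring R] [IsAddTorsionFree R] (S : Subring R) :
    IsAddTorsionFree S :=
  Function.Injective.isAddTorsionFree S.subtype.toAddMonoidHom Subtype.val_injective

theorem Subring.mul_self_eq_one_of_isUnit {ι : Type*} {S : Subring (ι → ℤ)} {u : S}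
    (hu : IsUnit u) : u * u = 1 :=
  Subtype.ext <| funext fun i =>
    Int.isUnit_mul_self (hu.map ((Pi.evalRingHom (fun _ => ℤ) i).comp S.subtype))

theorem eq_of_smul_eq_of_smul_eq_of_odd_orderOf {M X : Type*} [Group M] [MulAction M X] {g : M}
    (hg : Odd (orderOf g)) {a b : X} (hab : g • a = b) (hba : g • b = a) : a = b := by
  have hsq : g ^ 2 ∈ stabilizer M a := by
    rw [mem_stabilizer_iff, pow_two, mul_smul, hab, hba]
  obtain ⟨m, hm⟩ := hg
  calc a = g ^ orderOf g • a := by rw [pow_orderOf_eq_one, one_smul]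
    _ = g • (g ^ 2) ^ m • a := by rw [hm, ← pow_mul, pow_succ', mul_smul]
    _ = b := by rw [((stabilizer M a).pow_mem hsq m : _ • a = a), hab]

namespace Sym2

variable {M X : Type*} [Group M] [MulAction M X]

instance instMulAction : MulAction M (Sym2 X) where
  smul g := Sym2.map (g • ·)
  one_smul s := by
    change Sym2.map _ s = s
    simp only [one_smul, Sym2.map_id', id]
  mul_smul g h s := by
    change Sym2.map _ s = Sym2.map _ (Sym2.map _ s)
    rw [Sym2.map_map]
    simp only [Function.comp_def, mul_smul]

theorem smul_mk (g : M) (a b : X) : g • s(a, b) = s(g • a, g • b) :=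
  Sym2.map_mk _ _ _

theorem mk_mem_fixedPoints_iff (hM : Odd (Nat.card M)) {a b : X} :
    s(a, b) ∈ fixedPoints M (Sym2 X) ↔ a ∈ fixedPoints M X ∧ b ∈ fixedPoints M X := by
  refine ⟨fun h => forall_and.mp fun g => ?_, fun ⟨ha, hb⟩ g => by rw [smul_mk, ha g, hb g]⟩
  have hg : Odd (orderOf g) := hM.of_dvd_nat (orderOf_dvd_natCard g)
  rcases Sym2.eq_iff.mp ((smul_mk g a b).symm.trans (h g)) with hfix | ⟨hab, hba⟩
  · exact hfix
  · obtain rfl := eq_of_smul_eq_of_smul_eq_of_odd_orderOf hg hab hba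
    exact ⟨hab, hba⟩

theorem natCard_fixedPoints (hM : Odd (Nat.card M)) :
    Nat.card (fixedPoints M (Sym2 X)) = Nat.card (Sym2 (fixedPoints M X)) := by
  have hmem (s : Sym2 (fixedPoints M X)) :
      s.map Subtype.val ∈ fixedPoints M (Sym2 X) := by
    induction s using Sym2.ind with
    | _ a b => exact (mk_mem_fixedPoints_iff hM).mpr ⟨a.2, b.2⟩
  let f (s : Sym2 (fixedPoints M X)) : fixedPoints M (Sym2 X) :=
    ⟨s.map Subtype.val, hmem s⟩
  have hf : Function.Injective f := fun s t hst =>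
    Sym2.map.injective Subtype.val_injective (congrArg Subtype.val hst)
  refine (Nat.card_eq_of_bijective f ⟨hf, fun ⟨s, hs⟩ => ?_⟩).symm
  induction s using Sym2.ind with
  | _ a b =>
    obtain ⟨ha, hb⟩ := (mk_mem_fixedPoints_iff hM).mp hs
    exact ⟨s(⟨a, ha⟩, ⟨b, hb⟩), rfl⟩

theorem natCard_mul_two (α : Type*) :
    Nat.card (Sym2 α) * 2 = Nat.card α * Nat.card α + Nat.card α := by
  rw [Sym2.natCard, ← Nat.add_one_mul_choose_eq, Nat.choose_one_right]
  ring

end Sym2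

section Burnside

variable {G : Type} [Group G]

theorem markVector_sym2_mul_two (hodd : Odd (Nat.card G)) (X : Type) [MulAction G X]
    (H : Subgroup G) :
    markVector G (Sym2 X) H * 2 = markVector G X H * markVector G X H + markVector G X H := by
  have hH : Odd (Nat.card H) := hodd.of_dvd_nat H.card_subgroup_dvd_card
  simp only [markVector]
  rw [Sym2.natCard_fixedPoints hH]
  exact_mod_cast Sym2.natCard_mul_two _

theorem burnsideMk_mul_self_sub (hodd : Odd (Nat.card G)) (X : Type) [Finite X]
    [MulAction G X] :
    burnsideMk G X * burnsideMk G X - burnsideMk G X =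
      2 * (burnsideMk G (Sym2 X) - burnsideMk G X) := by
  refine Subtype.ext <| funext fun H => ?_
  change markVector G X H * markVector G X H - markVector G X H =
    2 * (markVector G (Sym2 X) H - markVector G X H)
  linarith [markVector_sym2_mul_two hodd X H]

theorem BurnsideRing.two_dvd_mul_self_sub (hodd : Odd (Nat.card G)) (x : BurnsideRing G) :
    2 ∣ x * x - x := by
  have hle : BurnsideRing G ≤
      (idempotentModTwoSubring (BurnsideRing G)).map (BurnsideRing G).subtype :=
    Subring.closure_le.mpr fun _ ⟨X, _, _, hX⟩ =>
      ⟨burnsideMk G X, ⟨_, burnsideMk_mul_self_sub hodd X⟩, hX.symm⟩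
  obtain ⟨y, hy, hyx⟩ := hle x.2
  exact Subtype.ext hyx ▸ hy

end Burnside

theorem burnside_units_idempotents_general (G : Type) [Group G]
    (hodd : Odd (Nat.card G)) :
    (∀ u : BurnsideRing G, IsUnit u →
        ∃ e : BurnsideRing G, u + 1 = 2 * e ∧ IsIdempotentElem e) ∧
      (∀ e : BurnsideRing G, IsIdempotentElem e → IsUnit (2 * e - 1)) ∧
      (∀ u : BurnsideRing G, IsUnit u →
        ∃! e : BurnsideRing G, IsIdempotentElem e ∧ 2 * e - 1 = u) := by
  have half (u : BurnsideRing G) (hu : IsUnit u) :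
      ∃ e : BurnsideRing G, u + 1 = 2 * e ∧ IsIdempotentElem e :=
    exists_add_one_eq_two_mul_isIdempotentElem (Subring.mul_self_eq_one_of_isUnit hu)
      (BurnsideRing.two_dvd_mul_self_sub hodd u)
  refine ⟨half, fun e he => he.isUnit_two_mul_sub_one, fun u hu => ?_⟩
  obtain ⟨e, hue, he⟩ := half u hu
  have hu : 2 * e - 1 = u := by rw [← hue, add_sub_cancel_right]
  exact ⟨e, ⟨he, hu⟩, fun e' ⟨_, he'⟩ => two_mul_sub_one_injective (he'.trans hu.symm)⟩

/-- Let `G` be a finite group of odd order.  Then for every unit `u` of the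
Burnside ring `A(G)`, the element `(u+1)/2` exists in `A(G)` (i.e. `u + 1` is divisible by
`2`) and is idempotent; moreover `e ↦ 2e − 1` is a bijection from idempotent elements to
unit elements of `A(G)`. -/
theorem burnside_units_idempotents (G : Type) [Group G] [Finite G]
    (hodd : Odd (Nat.card G)) :
    (∀ u : BurnsideRing G, IsUnit u →
        ∃ e : BurnsideRing G, u + 1 = 2 * e ∧ IsIdempotentElem e) ∧
      (∀ e : BurnsideRing G, IsIdempotentElem e → IsUnit (2 * e - 1)) ∧
      (∀ u : BurnsideRing G, IsUnit u →
        ∃! e : BurnsideRing G, IsIdempotentElem e ∧ 2 * e - 1 = u) :=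
  burnside_units_idempotents_general G hodd
end

section
/- Let G be a finite group. An element f of ∏_{(H)} ℤ (product over conjugacy classes of subgroups) lies in the image of the mark homomorphism φ : A(G) → ∏_{(H)} ℤ if and only if for every subgroup H of G: Σ_C n_{C/H} · f(C) ≡ 0 mod |N_G(H)/H|, where the sum is over subgroups C with H ◁ C and C/H cyclic, and n_{C/H} is the number of generators of the cyclic group C/H. -/
/-!
For a finite `G`-set `X`, the normalizer `N = N_G(H)` acts on `X^H`, and `n ∈ N` fixes a point
of `X^H` exactly when `H ⊔ ⟨n⟩` fixes it. Every subgroup `C` with `H ◁ C` and `C/H` cyclic is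
`H ⊔ ⟨n⟩` for exactly `|H| · φ([C : H])` elements `n ∈ N`, so Burnside's lemma for `N` acting on
`X^H` gives `Σ_C φ([C : H]) |X^C| = |N/H| · #(X^H / N)`. The congruences are additive, hence hold
on all of `A(G)`.

Conversely, let `f` satisfy them and be supported in a set `S` of subgroups closed under
subconjugation, and let `H ∈ S` have maximal order. The congruence at `H` collapses to
`|N/H| ∣ f(H)`, and `|(G/H)^H| = |N/H|`, so subtracting `(f(H) / |N/H|) · [G/H]` makes `f` vanish
on the conjugates of `H` while changing it only on subconjugates of `H`. Induction on `S` ends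
at `f = 0`.
-/

open MulAction

open Subgroup

section Conjugation

variable {G : Type} [Group G]

lemma map_conj_mul (a b : G) (K : Subgroup G) :
    K.map (MulAut.conj (a * b)).toMonoidHom =
      (K.map (MulAut.conj b).toMonoidHom).map (MulAut.conj a).toMonoidHom := by
  rw [map_map, map_mul]
  rfl

lemma map_conj_one (K : Subgroup G) : K.map (MulAut.conj (1 : G)).toMonoidHom = K := by
  rw [map_one]
  exact map_id K

lemma map_conj_inv_map_conj (x : G) (K : Subgroup G) :
    (K.map (MulAut.conj x).toMonoidHom).map (MulAut.conj x⁻¹).toMonoidHom = K := by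
  rw [← map_conj_mul, inv_mul_cancel, map_conj_one]

lemma card_map_conj (g : G) (K : Subgroup G) :
    Nat.card (K.map (MulAut.conj g).toMonoidHom) = Nat.card K :=
  card_map_of_injective (MulAut.conj g).injective

end Conjugation

section FixedPoints

variable {G : Type} [Group G] {X : Type} [MulAction G X]

lemma mem_fixedPoints_iff_le_stabilizer {K : Subgroup G} {x : X} :
    x ∈ fixedPoints K X ↔ K ≤ stabilizer G x :=
  ⟨fun hx k hk => hx ⟨k, hk⟩, fun hK k => hK k.2⟩

lemma mem_fixedPoints_sup_zpowers_iff {H : Subgroup G} {g : G} {x : X} :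
    x ∈ fixedPoints (H ⊔ zpowers g : Subgroup G) X ↔
      x ∈ fixedPoints H X ∧ g • x = x := by
  simp only [mem_fixedPoints_iff_le_stabilizer, sup_le_iff, zpowers_le, mem_stabilizer_iff]

lemma fixedPoints_subgroupOf {H K : Subgroup G} (hHK : H ≤ K) :
    fixedPoints (H.subgroupOf K) X = fixedPoints H X := by
  ext x
  exact ⟨fun hx h => hx ⟨⟨h, hHK h.2⟩, h.2⟩, fun hx h => hx ⟨h, h.2⟩⟩

lemma card_fixedPoints_map_conj (g : G) (K : Subgroup G) :
    Nat.card (fixedPoints (K.map (MulAut.conj g).toMonoidHom) X) = Nat.card (fixedPoints K X) :=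
  Nat.card_congr <| (Equiv.subtypeEquiv (MulAction.toPerm g) fun x => by
    simp only [mem_fixedPoints_iff_le_stabilizer, toPerm_apply,
      stabilizer_smul_eq_stabilizer_map_conj,
      map_le_map_iff_of_injective (f := (MulAut.conj g).toMonoidHom)
        (MulAut.conj g).injective]).symm

lemma exists_map_conj_le_of_markVector_ne_zero {H K : Subgroup G}
    (hK : markVector G (G ⧸ H) K ≠ 0) : ∃ g : G, K.map (MulAut.conj g).toMonoidHom ≤ H := by
  obtain ⟨⟨x, hx⟩⟩ := (Nat.card_ne_zero.1 (Nat.cast_ne_zero.1 hK)).1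
  obtain ⟨g, rfl⟩ := QuotientGroup.mk_surjective x
  refine ⟨g⁻¹, ?_⟩
  have hstab : stabilizer G (g : G ⧸ H) = H.map (MulAut.conj g).toMonoidHom := by
    calc stabilizer G (g : G ⧸ H) = stabilizer G (g • ((1 : G) : G ⧸ H)) := by
          rw [MulAction.Quotient.smul_coe, smul_eq_mul, mul_one]
      _ = H.map (MulAut.conj g).toMonoidHom := by
          rw [stabilizer_smul_eq_stabilizer_map_conj, stabilizer_quotient]
  have hKg : K ≤ H.map (MulAut.conj g).toMonoidHom :=
    hstab ▸ mem_fixedPoints_iff_le_stabilizer.1 hx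
  simpa only [map_conj_inv_map_conj] using map_mono (f := (MulAut.conj g⁻¹).toMonoidHom) hKg

end FixedPoints

section CyclicExtensions

variable {G : Type} [Group G]

def cyclicExtensions (H : Subgroup G) : Set (Subgroup G) :=
  {C | H ≤ C ∧ (H.subgroupOf C).Normal ∧ ∃ c ∈ C, C = H ⊔ zpowers c}

lemma mem_cyclicExtensions_iff {H C : Subgroup G} :
    C ∈ cyclicExtensions H ↔ ∃ n ∈ normalizer (H : Set G), H ⊔ zpowers n = C := by
  constructor
  · rintro ⟨hHC, hH, c, hc, rfl⟩
    exact ⟨c, le_normalizer_of_normal_subgroupOf hHC hc, rfl⟩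
  · rintro ⟨n, hn, rfl⟩
    have hle : H ⊔ zpowers n ≤ normalizer (H : Set G) := sup_le le_normalizer (zpowers_le.2 hn)
    exact ⟨le_sup_left, (normal_subgroupOf_iff_le_normalizer le_sup_left).2 hle,
      n, mem_sup_right (mem_zpowers n), rfl⟩

lemma self_mem_cyclicExtensions (H : Subgroup G) : H ∈ cyclicExtensions H :=
  mem_cyclicExtensions_iff.2 ⟨1, one_mem _, by simp⟩

lemma map_subtype_eq_self_iff {C : Subgroup G} {L : Subgroup C} : L.map C.subtype = C ↔ L = ⊤ :=
  calc L.map C.subtype = C ↔ L.map C.subtype = (⊤ : Subgroup C).map C.subtype := by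
        rw [← MonoidHom.range_eq_map, range_subtype]
    _ ↔ L = ⊤ := (map_injective C.subtype_injective).eq_iff

lemma sup_zpowers_eq_iff_zpowers_mk_eq_top {H C : Subgroup G} (hHC : H ≤ C)
    [(H.subgroupOf C).Normal] (x : C) :
    H ⊔ zpowers (x : G) = C ↔ zpowers (QuotientGroup.mk' (H.subgroupOf C) x) = ⊤ := by
  have hmap : (H.subgroupOf C ⊔ zpowers x).map C.subtype = H ⊔ zpowers (x : G) := by
    rw [Subgroup.map_sup, subgroupOf_map_subtype, inf_of_le_left hHC, MonoidHom.map_zpowers,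
      coe_subtype]
  have hcomap : (zpowers (QuotientGroup.mk' (H.subgroupOf C) x)).comap
      (QuotientGroup.mk' (H.subgroupOf C)) = H.subgroupOf C ⊔ zpowers x := by
    rw [← MonoidHom.map_zpowers, QuotientGroup.comap_map_mk']
  rw [← hmap, ← hcomap, map_subtype_eq_self_iff,
    ← comap_top (QuotientGroup.mk' (H.subgroupOf C)),
    (comap_injective (QuotientGroup.mk'_surjective _)).eq_iff]

lemma card_zpowers_eq_top_eq_totient {Q : Type*} [Group Q] [Finite Q] [IsCyclic Q] :
    Nat.card {q : Q // zpowers q = ⊤} = Nat.totient (Nat.card Q) := by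
  have : Fintype Q := Fintype.ofFinite Q
  classical
  have hgen : ∀ q : Q, zpowers q = ⊤ ↔ orderOf q = Fintype.card Q := fun q => by
    rw [← Nat.card_eq_fintype_card]
    exact ⟨orderOf_eq_card_of_zpowers_eq_top,
      fun h => eq_top_of_card_eq _ (by rw [Nat.card_zpowers, h])⟩
  rw [Nat.card_eq_fintype_card, Fintype.card_subtype, Nat.card_eq_fintype_card]
  simp_rw [hgen]
  exact IsCyclic.card_orderOf_eq_totient dvd_rfl

lemma card_subtype_subgroup {K : Subgroup G} {p : G → Prop} (hp : ∀ g, p g → g ∈ K) :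
    Nat.card {k : K // p k} = Nat.card {g : G // p g} :=
  Nat.card_congr <| (Equiv.subtypeSubtypeEquivSubtypeInter (· ∈ K) p).trans
    (Equiv.subtypeEquivRight fun g => and_iff_right_of_imp (hp g))

lemma card_sup_zpowers_eq [Finite G] {H C : Subgroup G} (hC : C ∈ cyclicExtensions H) :
    Nat.card {n : normalizer (H : Set G) // H ⊔ zpowers (n : G) = C} =
      Nat.card H * Nat.totient (H.relIndex C) := by
  obtain ⟨hHC, hH, c, hc, hCc⟩ := hC
  have hmemC : ∀ g : G, H ⊔ zpowers g = C → g ∈ C := fun g hg =>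
    hg ▸ mem_sup_right (mem_zpowers g)
  have : IsCyclic (C ⧸ H.subgroupOf C) := isCyclic_iff_exists_zpowers_eq_top.2
    ⟨_, (sup_zpowers_eq_iff_zpowers_mk_eq_top hHC ⟨c, hc⟩).1 hCc.symm⟩
  rw [card_subtype_subgroup fun g hg => le_normalizer_of_normal_subgroupOf hHC (hmemC g hg),
    ← card_subtype_subgroup (K := C) hmemC,
    Nat.card_congr (Equiv.subtypeEquivRight (sup_zpowers_eq_iff_zpowers_mk_eq_top hHC))]
  calc Nat.card {x : C // zpowers (QuotientGroup.mk' (H.subgroupOf C) x) = ⊤}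
      = Nat.card (H.subgroupOf C × {q : C ⧸ H.subgroupOf C // zpowers q = ⊤}) :=
        Nat.card_congr (QuotientGroup.preimageMkEquivSubgroupProdSet _ {q | zpowers q = ⊤})
    _ = Nat.card H * Nat.totient (H.relIndex C) := by
        rw [Nat.card_prod, Nat.card_congr (subgroupOfEquivOfLe hHC).toEquiv,
          card_zpowers_eq_top_eq_totient]
        rfl

end CyclicExtensions

section Congruences

variable {G : Type} [Group G]

abbrev WeylGroup (H : Subgroup G) : Type :=
  normalizer (H : Set G) ⧸ H.subgroupOf (normalizer (H : Set G))

noncomputable def cyclicSum [Finite G] (H : Subgroup G) : (Subgroup G → ℤ) →+ ℤ where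
  toFun f := ∑ᶠ C ∈ cyclicExtensions H, (Nat.totient (H.relIndex C) : ℤ) * f C
  map_zero' := by simp
  map_add' f g := by
    simp only [Pi.add_apply, mul_add]
    exact finsum_mem_add_distrib (Set.toFinite _)

lemma cyclicSum_apply [Finite G] (H : Subgroup G) (f : Subgroup G → ℤ) :
    cyclicSum H f = ∑ C ∈ (Set.toFinite (cyclicExtensions H)).toFinset,
      (Nat.totient (H.relIndex C) : ℤ) * f C :=
  finsum_mem_eq_finite_toFinset_sum _ _

lemma sum_normalizer_sup_zpowers [Finite G] (H : Subgroup G) (F : Subgroup G → ℤ) :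
    ∑ᶠ n : normalizer (H : Set G), F (H ⊔ zpowers (n : G)) = Nat.card H * cyclicSum H F := by
  classical
  have : Fintype (normalizer (H : Set G)) := Fintype.ofFinite _
  set T := (Set.toFinite (cyclicExtensions H)).toFinset
  have hmaps : ∀ n ∈ (Finset.univ : Finset (normalizer (H : Set G))),
      H ⊔ zpowers (n : G) ∈ T :=
    fun n _ => (Set.Finite.mem_toFinset _).2 (mem_cyclicExtensions_iff.2 ⟨n, n.2, rfl⟩)
  rw [finsum_eq_sum_of_fintype, ← Finset.sum_fiberwise_of_maps_to hmaps, cyclicSum_apply,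
    Finset.mul_sum]
  refine Finset.sum_congr rfl fun C hC => ?_
  rw [Finset.sum_congr rfl fun n hn => by rw [(Finset.mem_filter.1 hn).2], Finset.sum_const,
    ← Fintype.card_subtype, ← Nat.card_eq_fintype_card,
    card_sup_zpowers_eq ((Set.Finite.mem_toFinset _).1 hC), nsmul_eq_mul]
  push_cast
  ring

variable {X : Type} [MulAction G X]

lemma card_fixedBy_fixedPoints_subgroupOf (H : Subgroup G) (n : normalizer (H : Set G)) :
    Nat.card (fixedBy (fixedPoints (H.subgroupOf (normalizer (H : Set G))) X) n) =
      Nat.card (fixedPoints (H ⊔ zpowers (n : G) : Subgroup G) X) := by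
  refine Nat.card_congr <| (Equiv.subtypeEquivRight fun y => Subtype.ext_iff).trans <|
    (Equiv.subtypeSubtypeEquivSubtypeInter _ (fun x : X => (n : G) • x = x)).trans <|
    Equiv.subtypeEquivRight fun x => ?_
  rw [fixedPoints_subgroupOf le_normalizer, mem_fixedPoints_sup_zpowers_iff]

lemma cyclicSum_markVector [Finite G] [Finite X] (H : Subgroup G) :
    cyclicSum H (markVector G X) = Nat.card (WeylGroup H) *
      Nat.card (orbitRel.Quotient (normalizer (H : Set G))
        (fixedPoints (H.subgroupOf (normalizer (H : Set G))) X)) := by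
  classical
  have : Fintype (normalizer (H : Set G)) := Fintype.ofFinite _
  have : Fintype (orbitRel.Quotient (normalizer (H : Set G))
    (fixedPoints (H.subgroupOf (normalizer (H : Set G))) X)) := Fintype.ofFinite _
  have : ∀ n : normalizer (H : Set G),
    Fintype (fixedBy (fixedPoints (H.subgroupOf (normalizer (H : Set G))) X) n) :=
    fun _ => Fintype.ofFinite _
  have hburnside := MulAction.sum_card_fixedBy_eq_card_orbits_mul_card_group
    (normalizer (H : Set G)) (fixedPoints (H.subgroupOf (normalizer (H : Set G))) X)
  simp only [← Nat.card_eq_fintype_card, card_fixedBy_fixedPoints_subgroupOf] at hburnside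
  have hN : Nat.card (normalizer (H : Set G)) = Nat.card (WeylGroup H) * Nat.card H := by
    rw [card_eq_card_quotient_mul_card_subgroup (H.subgroupOf _),
      Nat.card_congr (subgroupOfEquivOfLe le_normalizer).toEquiv]
  have hsum := sum_normalizer_sup_zpowers H (markVector G X)
  simp only [finsum_eq_sum_of_fintype, markVector, ← Nat.cast_sum, hburnside, hN] at hsum
  refine mul_left_cancel₀ (Nat.cast_ne_zero.2 (Nat.card_pos (α := H)).ne') ?_
  rw [← hsum]
  push_cast
  ring

end Congruences

section BurnsideRing

variable {G : Type} [Group G]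

lemma markVector_punit : markVector G PUnit = 1 := by
  ext K
  simp [markVector, fixedPoints]

lemma markVector_prod (X Y : Type) [MulAction G X] [MulAction G Y] :
    markVector G (X × Y) = markVector G X * markVector G Y := by
  ext K
  have hprod : fixedPoints K (X × Y) = fixedPoints K X ×ˢ fixedPoints K Y := by
    ext p
    simp only [mem_fixedPoints, Set.mem_prod, Prod.ext_iff, Prod.smul_fst, Prod.smul_snd,
      forall_and]
  simp only [markVector, hprod, Pi.mul_apply, Nat.card_congr (Equiv.Set.prod _ _), Nat.card_prod,
    Nat.cast_mul]

def gsetMarksSubmonoid (G : Type) [Group G] : Submonoid (Subgroup G → ℤ) where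
  carrier := GSetMarks G
  one_mem' := ⟨PUnit, inferInstance, inferInstance, markVector_punit.symm⟩
  mul_mem' := by
    rintro _ _ ⟨X, _, _, rfl⟩ ⟨Y, _, _, rfl⟩
    exact ⟨X × Y, inferInstance, inferInstance, (markVector_prod X Y).symm⟩

lemma mem_burnsideRing_iff {f : Subgroup G → ℤ} :
    f ∈ BurnsideRing G ↔ f ∈ AddSubgroup.closure (GSetMarks G) := by
  have hclosure : Submonoid.closure (GSetMarks G) = gsetMarksSubmonoid G :=
    Submonoid.closure_eq (gsetMarksSubmonoid G)
  rw [BurnsideRing, Subring.mem_closure_iff, hclosure]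
  rfl

end BurnsideRing

section MarkCongruences

variable (G : Type) [Group G]

noncomputable def markCongruences [Finite G] : AddSubgroup (Subgroup G → ℤ) :=
  ⨅ H : Subgroup G, (AddSubgroup.zmultiples (Nat.card (WeylGroup H) : ℤ)).comap (cyclicSum H)

def conjInvariant : AddSubgroup (Subgroup G → ℤ) where
  carrier := {f | ∀ (g : G) (K : Subgroup G), f (K.map (MulAut.conj g).toMonoidHom) = f K}
  zero_mem' _ _ := rfl
  add_mem' hf hf' g K := congrArg₂ (· + ·) (hf g K) (hf' g K)
  neg_mem' hf g K := congrArg (- ·) (hf g K)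

variable {G}

lemma mem_markCongruences [Finite G] {f : Subgroup G → ℤ} :
    f ∈ markCongruences G ↔ ∀ H, (Nat.card (WeylGroup H) : ℤ) ∣ cyclicSum H f := by
  simp only [markCongruences, AddSubgroup.mem_iInf, AddSubgroup.mem_comap,
    Int.mem_zmultiples_iff]

lemma markVector_mem_markCongruences [Finite G] (X : Type) [Finite X] [MulAction G X] :
    markVector G X ∈ markCongruences G :=
  mem_markCongruences.2 fun H => Dvd.intro _ (cyclicSum_markVector H).symm

lemma markVector_mem_conjInvariant (X : Type) [MulAction G X] :
    markVector G X ∈ conjInvariant G := fun g K => by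
  simp only [markVector, card_fixedPoints_map_conj]

lemma burnsideRing_le_markCongruences_inf_conjInvariant [Finite G] :
    (BurnsideRing G).toAddSubgroup ≤ markCongruences G ⊓ conjInvariant G := fun f hf =>
  (AddSubgroup.closure_le _).2
    (by rintro _ ⟨X, _, _, rfl⟩
        exact ⟨markVector_mem_markCongruences X, markVector_mem_conjInvariant X⟩)
    (mem_burnsideRing_iff.1 hf)

end MarkCongruences

section Reconstruction

variable {G : Type} [Group G]

lemma cyclicSum_eq_apply_self [Finite G] {H : Subgroup G} {f : Subgroup G → ℤ}
    (hf : ∀ C, H < C → f C = 0) : cyclicSum H f = f H := by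
  rw [cyclicSum_apply, Finset.sum_eq_single_of_mem H
      ((Set.Finite.mem_toFinset _).2 (self_mem_cyclicExtensions H)),
    relIndex_self, Nat.totient_one, Nat.cast_one, one_mul]
  intro C hC hCH
  rw [hf C (lt_of_le_of_ne ((Set.Finite.mem_toFinset _).1 hC).1 (Ne.symm hCH)), mul_zero]

lemma markVector_quotient_self [Finite G] (H : Subgroup G) :
    markVector G (G ⧸ H) H = Nat.card (WeylGroup H) :=
  congrArg _ (Nat.card_congr (Sylow.fixedPointsMulLeftCosetsEquivQuotient H))

def IsSubconjClosed (S : Finset (Subgroup G)) : Prop :=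
  ∀ L ∈ S, ∀ (g : G) (K : Subgroup G), K.map (MulAut.conj g).toMonoidHom ≤ L → K ∈ S

open Classical in
lemma IsSubconjClosed.filter_not_conj [Finite G] {S : Finset (Subgroup G)}
    (hS : IsSubconjClosed S) {H : Subgroup G} (hmax : ∀ K ∈ S, Nat.card K ≤ Nat.card H) :
    IsSubconjClosed (S.filter fun K => ∀ x : G, K.map (MulAut.conj x).toMonoidHom ≠ H) := by
  intro L hL g K hKL
  rw [Finset.mem_filter] at hL ⊢
  refine ⟨hS L hL.1 g K hKL, fun x hx => ?_⟩
  have hHL : H.map (MulAut.conj (g * x⁻¹)).toMonoidHom ≤ L := by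
    rwa [← hx, ← map_conj_mul, inv_mul_cancel_right]
  have hcard : Nat.card L ≤ Nat.card (H.map (MulAut.conj (g * x⁻¹)).toMonoidHom) := by
    rw [card_map_conj]
    exact hmax L hL.1
  apply hL.2 (g * x⁻¹)⁻¹
  rw [← eq_of_le_of_card_ge hHL hcard, map_conj_inv_map_conj]

open Classical in
lemma mem_burnsideRing_of_support_subset [Finite G] {S : Finset (Subgroup G)}
    (hS : IsSubconjClosed S) {f : Subgroup G → ℤ}
    (hf : f ∈ markCongruences G ⊓ conjInvariant G) (hsupp : ∀ K, f K ≠ 0 → K ∈ S) :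
    f ∈ BurnsideRing G := by
  induction S using Finset.strongInduction generalizing f with
  | H S ih =>
  obtain rfl | ⟨H, hHS, hmax⟩ :=
    S.eq_empty_or_nonempty.imp id (S.exists_max_image fun K => Nat.card K)
  · obtain rfl : f = 0 := funext fun K => of_not_not fun h => by simpa using hsupp K h
    exact zero_mem _
  obtain ⟨m, hm⟩ : (Nat.card (WeylGroup H) : ℤ) ∣ f H := by
    rw [← cyclicSum_eq_apply_self fun C hC => of_not_not fun h =>
      hC.ne (eq_of_le_of_card_ge hC.le (hmax C (hsupp C h)))]
    exact mem_markCongruences.1 hf.1 H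
  set v := markVector G (G ⧸ H)
  have hg : f - m • v ∈ markCongruences G ⊓ conjInvariant G :=
    sub_mem hf <| zsmul_mem (AddSubgroup.mem_inf.2
      ⟨markVector_mem_markCongruences _, markVector_mem_conjInvariant _⟩) m
  have hgH : (f - m • v) H = 0 := by
    simp only [Pi.sub_apply, Pi.smul_apply, v, markVector_quotient_self, hm, smul_eq_mul]
    ring
  have hgsupp : ∀ K, (f - m • v) K ≠ 0 →
      K ∈ S.filter fun K => ∀ x : G, K.map (MulAut.conj x).toMonoidHom ≠ H := by
    intro K hK
    refine Finset.mem_filter.2 ⟨?_, fun x hx => hK (by rw [← hg.2 x K, hx, hgH])⟩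
    by_cases hfK : f K = 0
    · have hvK : v K ≠ 0 := fun h => hK (by
        simp only [Pi.sub_apply, Pi.smul_apply, hfK, h, smul_zero, sub_zero])
      obtain ⟨x, hx⟩ := exists_map_conj_le_of_markVector_ne_zero hvK
      exact hS H hHS x K hx
    · exact hsupp K hfK
  have hssub : (S.filter fun K => ∀ x : G, K.map (MulAut.conj x).toMonoidHom ≠ H) ⊂ S :=
    Finset.filter_ssubset.2 ⟨H, hHS, fun h => h 1 (map_conj_one H)⟩
  rw [← sub_add_cancel f (m • v)]
  exact add_mem (ih _ hssub (hS.filter_not_conj hmax) hg hgsupp)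
    (zsmul_mem (Subring.subset_closure (mem_gsetMarks G (G ⧸ H))) m)

theorem burnsideRing_toAddSubgroup_eq [Finite G] :
    (BurnsideRing G).toAddSubgroup = markCongruences G ⊓ conjInvariant G := by
  have := Fintype.ofFinite (Subgroup G)
  refine le_antisymm burnsideRing_le_markCongruences_inf_conjInvariant fun f hf => ?_
  exact mem_burnsideRing_of_support_subset (S := Finset.univ)
    (fun _ _ _ _ _ => Finset.mem_univ _) hf fun _ _ => Finset.mem_univ _

end Reconstruction

/-- For a finite group `G`, a conjugation-invariant integer-valued function
`f` on the subgroups of `G` (i.e. an element of `∏_{(H)} ℤ`) lies in the image of the mark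
homomorphism `φ : A(G) → ∏_{(H)} ℤ` (here: lies in the subring `A(G) ≤ ∏_{H} ℤ`) if and
only if for every subgroup `H` of `G`:
`Σ_C n_{C/H} · f(C) ≡ 0 mod |N_G(H)/H|`, where the sum runs over subgroups `C` with
`H ◁ C` and `C/H` cyclic (expressed as: `C` is generated by `H` together with one element),
and `n_{C/H}` is the number of generators of the cyclic group `C/H`, i.e. the totient of
`|C/H| = [C : H]`. -/
theorem burnside_image_congruences (G : Type) [Group G] [Finite G]
    (f : Subgroup G → ℤ)
    (hconj : ∀ (g : G) (H : Subgroup G),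
      f (Subgroup.map (MulAut.conj g).toMonoidHom H) = f H) :
    f ∈ BurnsideRing G ↔
      ∀ H : Subgroup G,
        (Nat.card (Subgroup.normalizer (H : Set G) ⧸ H.subgroupOf (Subgroup.normalizer (H : Set G))) : ℤ) ∣
          ∑ᶠ C ∈ {C : Subgroup G | H ≤ C ∧ (H.subgroupOf C).Normal ∧
              ∃ c ∈ C, C = H ⊔ Subgroup.zpowers c},
            (Nat.totient (H.relIndex C) : ℤ) * f C := by
  have hmem := SetLike.ext_iff.1 (burnsideRing_toAddSubgroup_eq (G := G)) f
  rw [Subring.mem_toAddSubgroup, AddSubgroup.mem_inf, mem_markCongruences] at hmem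
  exact hmem.trans (and_iff_left hconj)
end
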